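/- arXiv:2104.05867 — 4 statements merged into one kernel-verified Lean document; each statement's English description precedes it below -/
import Mathlib

section
/- Let w be a word of length i over an alphabet Σ, and suppose w = x^{i/d} where x is the unique aperiodic word of length d such that w is a power of x. Then the number of unordered pairs {u,v} of nonempty words with u ≠ v and uv = vu = w equals ⌊(i/d − 1)/2⌋. -/
/-- w^j : j repeated copies of the word w joined together. -/
def wpow {α : Type*} (w : List α) (j : ℕ) : List α := (List.replicate j w).flatten

/-- A nonempty word is aperiodic (primitive) if writing it as x^j with j ≥ 1 forces j = 1. -/
def Aperiodic {α : Type*} (w : List α) : Prop :=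
  w ≠ [] ∧ ∀ (x : List α) (j : ℕ), 1 ≤ j → w = wpow x j → j = 1

/-!
If `uv = vu = xⁿ`, then `u` commutes with `xⁿ`, and so does `x`. Commutation with a fixed nonempty
word is transitive (for `a, b` commuting with `c`, both `ab` and `ba` commute with a long power of
`c` and so are its prefix of length `|a| + |b|`), so `u` commutes with `x`. Commuting words are
powers of a common word (Lyndon–Schützenberger), and as `x` is primitive that common word is `x`
itself. Hence the factorizations are exactly `u = xᵏ, v = xⁿ⁻ᵏ`, and the
unordered pairs with `u, v` nonempty and distinct are the `{xᵏ, xⁿ⁻ᵏ}` with `1 ≤ k < n / 2`.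
-/

section WordPowers

variable {α : Type*}

@[simp]
theorem wpow_zero (x : List α) : wpow x 0 = [] := rfl

@[simp]
theorem wpow_one (x : List α) : wpow x 1 = x := by simp [wpow]

theorem wpow_add (x : List α) (a b : ℕ) : wpow x (a + b) = wpow x a ++ wpow x b := by
  rw [wpow, wpow, wpow, List.replicate_add, List.flatten_append]

@[simp]
theorem length_wpow (x : List α) (j : ℕ) : (wpow x j).length = j * x.length := by
  simp [wpow]

theorem wpow_injective {x : List α} (hx : x ≠ []) : Function.Injective (wpow x) := by
  intro k l h
  have := congrArg List.length h
  simp only [length_wpow] at this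
  exact Nat.eq_of_mul_eq_mul_right (List.length_pos_of_ne_nil hx) this

theorem append_wpow_comm {a c : List α} (h : a ++ c = c ++ a) (j : ℕ) :
    a ++ wpow c j = wpow c j ++ a := by
  induction j with
  | zero => simp
  | succ j ih => rw [wpow_add, wpow_one, ← List.append_assoc, ih, List.append_assoc, h,
      List.append_assoc]

theorem eq_take_of_append_comm {a p : List α} (h : a ++ p = p ++ a)
    (hle : a.length ≤ p.length) : a = p.take a.length := by
  simpa [List.take_append_of_le_length hle] using congrArg (List.take a.length) h

theorem append_comm_of_append_comm_ne_nil {a b c : List α} (hc : c ≠ [])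
    (ha : a ++ c = c ++ a) (hb : b ++ c = c ++ b) : a ++ b = b ++ a := by
  set p := wpow c (a.length + b.length)
  have hlen : a.length + b.length ≤ p.length := by
    simpa [p] using Nat.le_mul_of_pos_right _ (List.length_pos_of_ne_nil hc)
  have hap : a ++ p = p ++ a := append_wpow_comm ha _
  have hbp : b ++ p = p ++ b := append_wpow_comm hb _
  have habp : a ++ b ++ p = p ++ (a ++ b) := by
    rw [List.append_assoc, hbp, ← List.append_assoc, hap, List.append_assoc]
  have hbap : b ++ a ++ p = p ++ (b ++ a) := by
    rw [List.append_assoc, hap, ← List.append_assoc, hbp, List.append_assoc]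
  rw [eq_take_of_append_comm habp (by simpa using hlen),
    eq_take_of_append_comm hbap (by simp; omega), List.length_append, List.length_append,
    Nat.add_comm]

theorem exists_eq_wpow_of_append_comm {u v : List α} (h : u ++ v = v ++ u) :
    ∃ z k l, u = wpow z k ∧ v = wpow z l := by
  induction hn : u.length + v.length using Nat.strong_induction_on generalizing u v with
  | _ n ih =>
  wlog hle : u.length ≤ v.length generalizing u v
  · obtain ⟨z, k, l, hv, hu⟩ := this h.symm (by omega) (by omega)
    exact ⟨z, l, k, hu, hv⟩
  by_cases hu : u = []
  · exact ⟨v, 0, 1, hu, (wpow_one v).symm⟩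
  set s := v.drop u.length
  have hv : v = u ++ s := by
    conv_lhs => rw [← List.take_append_drop u.length v, ← eq_take_of_append_comm h hle]
  have hs : u ++ s = s ++ u :=
    List.append_cancel_left (by rw [← hv, h, hv, List.append_assoc])
  have hlt : u.length + s.length < n := by
    have := List.length_pos_of_ne_nil hu
    have := congrArg List.length hv
    simp only [List.length_append] at this
    omega
  obtain ⟨z, k, l, hzu, hzs⟩ := ih _ hlt hs rfl
  exact ⟨z, k, k + l, hzu, by rw [hv, hzu, hzs, wpow_add]⟩

theorem Aperiodic.exists_eq_wpow_of_append_comm {u x : List α} (hx : Aperiodic x)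
    (h : u ++ x = x ++ u) : ∃ k, u = wpow x k := by
  obtain ⟨z, k, l, rfl, rfl⟩ := _root_.exists_eq_wpow_of_append_comm h
  have hl : 1 ≤ l := Nat.one_le_iff_ne_zero.2 (by rintro rfl; exact hx.1 rfl)
  obtain rfl := hx.2 z l hl rfl
  exact ⟨k, by rw [wpow_one]⟩

theorem Aperiodic.append_eq_wpow_and_append_eq_wpow_iff {x u v : List α} (hx : Aperiodic x)
    (n : ℕ) : (u ++ v = wpow x n ∧ v ++ u = wpow x n) ↔
      ∃ k ≤ n, u = wpow x k ∧ v = wpow x (n - k) := by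
  constructor
  · rintro ⟨huv, hvu⟩
    obtain rfl | hn := Nat.eq_zero_or_pos n
    · obtain ⟨rfl, rfl⟩ := List.append_eq_nil_iff.1 huv
      exact ⟨0, le_rfl, rfl, rfl⟩
    have hw : wpow x n ≠ [] := (wpow_injective hx.1).ne hn.ne'
    have hxw : x ++ wpow x n = wpow x n ++ x := append_wpow_comm rfl n
    have huw : u ++ wpow x n = wpow x n ++ u := by
      conv_lhs => rw [← hvu, ← List.append_assoc, huv]
    have hvw : v ++ wpow x n = wpow x n ++ v := by
      conv_lhs => rw [← huv, ← List.append_assoc, hvu]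
    obtain ⟨k, rfl⟩ := hx.exists_eq_wpow_of_append_comm
      (append_comm_of_append_comm_ne_nil hw huw hxw)
    obtain ⟨l, rfl⟩ := hx.exists_eq_wpow_of_append_comm
      (append_comm_of_append_comm_ne_nil hw hvw hxw)
    have hkl : k + l = n := wpow_injective hx.1 (by rw [wpow_add, huv])
    exact ⟨k, by omega, rfl, by rw [← hkl, Nat.add_sub_cancel_left]⟩
  · rintro ⟨k, hk, rfl, rfl⟩
    rw [← wpow_add, ← wpow_add, Nat.add_sub_cancel' hk, Nat.sub_add_cancel hk]
    exact ⟨rfl, rfl⟩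

theorem injOn_pair_wpow_wpow_sub {x : List α} [DecidableEq α] (hx : x ≠ []) (n : ℕ) :
    Set.InjOn (fun k ↦ ({wpow x k, wpow x (n - k)} : Finset (List α)))
      (Set.Icc 1 ((n - 1) / 2)) := by
  intro k ⟨hk1, hk2⟩ l ⟨hl1, hl2⟩ h
  simp only at h
  have hmem : wpow x k ∈ ({wpow x l, wpow x (n - l)} : Finset (List α)) :=
    h ▸ Finset.mem_insert_self _ _
  simp only [Finset.mem_insert, Finset.mem_singleton, (wpow_injective hx).eq_iff] at hmem
  omega

theorem Aperiodic.setOf_pairs_append_comm_eq_wpow [DecidableEq α] {x : List α}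
    (hx : Aperiodic x) (n : ℕ) :
    {s : Finset (List α) | ∃ u v : List α,
        u ≠ [] ∧ v ≠ [] ∧ u ≠ v ∧ u ++ v = wpow x n ∧ v ++ u = wpow x n ∧ s = {u, v}} =
      (fun k ↦ {wpow x k, wpow x (n - k)}) '' Set.Icc 1 ((n - 1) / 2) := by
  have hinj := wpow_injective hx.1
  ext s
  simp only [Set.mem_ofPred_eq, Set.mem_image, Set.mem_Icc]
  constructor
  · rintro ⟨u, v, hu, hv, huv, huvw, hvuw, rfl⟩
    obtain ⟨k, hk, rfl, rfl⟩ := (hx.append_eq_wpow_and_append_eq_wpow_iff n).1 ⟨huvw, hvuw⟩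
    have hk0 : k ≠ 0 := by rintro rfl; exact hu rfl
    have hnk0 : n - k ≠ 0 := by intro h; rw [h] at hv; exact hv rfl
    have hkk : k ≠ n - k := fun h ↦ huv (congrArg _ h)
    rcases le_total k (n - k) with hle | hle
    · exact ⟨k, ⟨by omega, by omega⟩, rfl⟩
    · refine ⟨n - k, ⟨by omega, by omega⟩, ?_⟩
      rw [Nat.sub_sub_self hk, Finset.pair_comm]
  · rintro ⟨k, ⟨hk1, hk2⟩, rfl⟩
    obtain ⟨huvw, hvuw⟩ := (hx.append_eq_wpow_and_append_eq_wpow_iff (v := wpow x (n - k)) n).2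
      ⟨k, by omega, rfl, rfl⟩
    exact ⟨wpow x k, wpow x (n - k), hinj.ne (by omega : k ≠ 0),
      hinj.ne (by omega : n - k ≠ 0), hinj.ne (by omega), huvw, hvuw, rfl⟩

theorem Aperiodic.ncard_pairs_append_comm_eq_wpow [DecidableEq α] {x : List α}
    (hx : Aperiodic x) (n : ℕ) :
    Set.ncard {s : Finset (List α) | ∃ u v : List α,
        u ≠ [] ∧ v ≠ [] ∧ u ≠ v ∧ u ++ v = wpow x n ∧ v ++ u = wpow x n ∧ s = {u, v}} =
      (n - 1) / 2 := by
  rw [hx.setOf_pairs_append_comm_eq_wpow, (injOn_pair_wpow_wpow_sub hx.1 n).ncard_image,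
    Set.ncard_eq_toFinset_card', Set.toFinset_Icc, Nat.card_Icc]
  omega

end WordPowers

theorem stmt_8_general {α : Type*} [DecidableEq α] (i d : ℕ) (w x : List α)
    (hxa : Aperiodic x) (hpow : w = wpow x (i / d)) :
    Set.ncard {s : Finset (List α) | ∃ u v : List α,
        u ≠ [] ∧ v ≠ [] ∧ u ≠ v ∧ u ++ v = w ∧ v ++ u = w ∧ s = {u, v}} =
      (i / d - 1) / 2 := by
  subst hpow
  exact hxa.ncard_pairs_append_comm_eq_wpow (i / d)

/-- if w has length i and w = x^{i/d} for the (unique) aperiodic word x of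
length d of which w is a power, then the number of unordered pairs {u,v} of nonempty
words with u ≠ v and uv = vu = w equals ⌊(i/d − 1)/2⌋. -/
theorem stmt_8 {α : Type*} [DecidableEq α] (i d : ℕ) (hd : 0 < d) (hdi : d ∣ i)
    (w x : List α) (hw : w.length = i) (hx : x.length = d)
    (hxa : Aperiodic x) (hpow : w = wpow x (i / d)) :
    Set.ncard {s : Finset (List α) | ∃ u v : List α,
        u ≠ [] ∧ v ≠ [] ∧ u ≠ v ∧ u ++ v = w ∧ v ++ u = w ∧ s = {u, v}} =
      (i / d - 1) / 2 :=
  stmt_8_general i d w x hxa hpow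
end

section
/- Fix an integer k ≥ 2 and an alphabet Σ of k symbols. For every integer i ≥ 2, S(i) = (i−1)·k^i − Σ_{d | i, d < i} ⌊(i/d − 1)/2⌋ · Σ_{d' | d} μ(d/d')·k^{d'}, where S(i) is the number of unordered ligation reaction sets {u,v,z} with uv = z and |z| = i, and μ is the classical Möbius function. Consequently |R^SET_n| = 2·Σ_{i=2}^{n} S(i). -/
/-!
The map `(u, v) ↦ {u, v, uv}` on pairs of nonempty words with `|uv| = i` identifies two pairs
only when they are `(u, v)` and `(v, u)` with `uv = vu`. Hence `S(i)` is the number `(i - 1) k^i`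
of such pairs minus the number of commuting pairs with `|u| < |v|`. Commuting words are powers
`s^a`, `s^b` of a unique primitive word `s`, so such a pair is a primitive word of length
`d ∣ i`, `d < i`, together with an exponent `a` with `2a < i/d`: there are `⌊(i/d - 1)/2⌋`
choices of `a`. Finally, every word of length `n` is a power of a unique primitive word, so
`k^n = ∑_{d ∣ n} P(d)` for the number `P(d)` of primitive words of length `d`, and Möbius
inversion gives `P(d) = ∑_{d' ∣ d} μ(d/d') k^{d'}`.
-/

/-- S(i): the number of unordered ligation reaction sets {u,v,z} with uv = z and |z| = i,
i.e. ordered triples (u,v,z) with uv = z, |z| = i, counted up to identifying (u,v,z)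
with (v,u,z) whenever uv = vu = z (the SET convention). -/
noncomputable def S (k i : ℕ) : ℕ :=
  Set.ncard {s : Finset (List (Fin k)) | ∃ u v : List (Fin k),
    u ≠ [] ∧ v ≠ [] ∧ (u ++ v).length = i ∧ s = {u, v, u ++ v}}

/-- |R^SET_n| = 2·Σ_{i=2}^{n} S(i): the number of ligation and cleavage reactions
involving words of length at most n under the SET convention. -/
noncomputable def RSET (k n : ℕ) : ℕ := 2 * ∑ i ∈ Finset.Icc 2 n, S k i

namespace List

variable {α : Type*}

def wpow (t : List α) : ℕ → List α
  | 0 => []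
  | n + 1 => t ++ wpow t n

@[simp] theorem wpow_zero (t : List α) : t.wpow 0 = [] := rfl

theorem wpow_succ (t : List α) (n : ℕ) : t.wpow (n + 1) = t ++ t.wpow n := rfl

@[simp] theorem wpow_one (t : List α) : t.wpow 1 = t := append_nil t

theorem wpow_add (t : List α) (m n : ℕ) : t.wpow (m + n) = t.wpow m ++ t.wpow n := by
  induction m with
  | zero => simp
  | succ m ih => rw [Nat.add_right_comm, wpow_succ, wpow_succ, ih, append_assoc]

theorem wpow_succ' (t : List α) (n : ℕ) : t.wpow (n + 1) = t.wpow n ++ t := by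
  rw [wpow_add, wpow_one]

@[simp] theorem length_wpow (t : List α) (n : ℕ) : (t.wpow n).length = n * t.length := by
  induction n with
  | zero => simp
  | succ n ih => rw [wpow_succ, length_append, ih]; ring

theorem wpow_wpow (t : List α) (m n : ℕ) : (t.wpow m).wpow n = t.wpow (n * m) := by
  induction n with
  | zero => simp
  | succ n ih => rw [wpow_succ, ih, Nat.succ_mul, Nat.add_comm, wpow_add]

theorem wpow_comm (t : List α) (m n : ℕ) : t.wpow m ++ t.wpow n = t.wpow n ++ t.wpow m := by
  rw [← wpow_add, ← wpow_add, Nat.add_comm]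

@[simp] theorem wpow_eq_nil_iff {t : List α} {n : ℕ} : t.wpow n = [] ↔ n = 0 ∨ t = [] := by
  rw [← length_eq_zero_iff, length_wpow, Nat.mul_eq_zero, length_eq_zero_iff]

theorem wpow_injective {t : List α} (ht : t ≠ []) : Function.Injective t.wpow := fun m n h =>
  Nat.eq_of_mul_eq_mul_right (length_pos_iff.mpr ht) (by simpa using congrArg length h)

theorem exists_wpow_of_append_comm {u v : List α} (h : u ++ v = v ++ u) :
    ∃ (t : List α) (m n : ℕ), u = t.wpow m ∧ v = t.wpow n := by
  induction hN : u.length + v.length using Nat.strong_induction_on generalizing u v with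
  | _ N ih =>
  wlog huv : u.length ≤ v.length generalizing u v
  · obtain ⟨t, m, n, hv, hu⟩ := this h.symm (by omega) (by omega)
    exact ⟨t, n, m, hu, hv⟩
  rcases eq_or_ne u [] with rfl | hu
  · exact ⟨v, 0, 1, rfl, (wpow_one v).symm⟩
  obtain ⟨w, rfl⟩ : u <+: v :=
    prefix_of_prefix_length_le (h ▸ prefix_append u v) (prefix_append v u) huv
  have hw : u ++ w = w ++ u := by simpa using h
  have hlt : u.length + w.length < N := by
    have := length_pos_iff.mpr hu
    simp only [← hN, length_append]
    omega
  obtain ⟨t, m, n, rfl, rfl⟩ := ih _ hlt hw rfl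
  exact ⟨t, m, m + n, rfl, (wpow_add t m n).symm⟩

def IsPrimitive (w : List α) : Prop := w ≠ [] ∧ ∀ t n, w = t.wpow n → t = w

theorem IsPrimitive.length_pos {w : List α} (hw : w.IsPrimitive) : 0 < w.length :=
  length_pos_iff.mpr hw.1

theorem exists_isPrimitive_wpow {w : List α} (hw : w ≠ []) :
    ∃ (t : List α) (m : ℕ), t.IsPrimitive ∧ 0 < m ∧ w = t.wpow m := by
  induction hN : w.length using Nat.strong_induction_on generalizing w with
  | _ N ih =>
  by_cases hp : w.IsPrimitive
  · exact ⟨w, 1, hp, one_pos, (wpow_one w).symm⟩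
  obtain ⟨t, n, rfl, htw⟩ : ∃ t n, w = t.wpow n ∧ t ≠ w := by
    simpa [IsPrimitive, hw] using hp
  have ht : t ≠ [] := by rintro rfl; simp at hw
  have hn : 2 ≤ n := by rcases n with _ | _ | n <;> simp_all
  have hlt : t.length < N := by
    have := length_pos_iff.mpr ht
    rw [← hN, length_wpow]
    nlinarith
  obtain ⟨s, m, hs, hm, rfl⟩ := ih _ hlt ht rfl
  exact ⟨s, n * m, hs, by positivity, wpow_wpow s m n⟩

theorem exists_isPrimitive_of_append_comm {u v : List α} (hu : u ≠ []) (hv : v ≠ [])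
    (h : u ++ v = v ++ u) :
    ∃ (s : List α) (a b : ℕ), s.IsPrimitive ∧ 0 < a ∧ 0 < b ∧ u = s.wpow a ∧ v = s.wpow b := by
  obtain ⟨g, m, n, rfl, rfl⟩ := exists_wpow_of_append_comm h
  obtain ⟨s, e, hs, he, rfl⟩ := exists_isPrimitive_wpow (w := g) (by rintro rfl; simp at hu)
  simp only [wpow_wpow, ne_eq, wpow_eq_nil_iff, not_or] at hu hv ⊢
  exact ⟨s, m * e, n * e, hs, Nat.pos_of_ne_zero hu.1, Nat.pos_of_ne_zero hv.1, rfl, rfl⟩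

/-- For `|s| ≤ |t|` write `t = s ++ r`: both `s ++ r` and `r ++ s` are prefixes of `s^(a-1)`
of the same length, so `s` and `r` commute and `t` is a power of `s`. -/
theorem IsPrimitive.eq_of_wpow_eq {s t : List α} (hs : s.IsPrimitive) (ht : t.IsPrimitive)
    {a b : ℕ} (ha : 0 < a) (hb : 0 < b) (h : s.wpow a = t.wpow b) : s = t := by
  wlog hle : s.length ≤ t.length generalizing s t a b
  · exact (this ht hs hb ha h.symm (by omega)).symm
  obtain ⟨a, rfl⟩ : ∃ a', a = a' + 1 := ⟨a - 1, by omega⟩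
  rcases Nat.lt_or_ge b 2 with hb1 | hb2
  · obtain rfl : b = 1 := by omega
    exact ht.2 s (a + 1) (by rw [h, wpow_one])
  obtain ⟨b, rfl⟩ : ∃ b', b = b' + 2 := ⟨b - 2, by omega⟩
  have ht_pre : t <+: s.wpow (a + 1) := h ▸ prefix_append t _
  obtain ⟨r, rfl⟩ : s <+: t :=
    prefix_of_prefix_length_le (prefix_append s (s.wpow a)) ht_pre hle
  have hlen : (s ++ r).length ≤ (s.wpow a).length := by
    have := congrArg length h
    simp only [length_wpow, length_append] at this hle ⊢
    nlinarith
  have h₁ : s ++ r <+: s.wpow a :=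
    prefix_of_prefix_length_le ht_pre (wpow_succ' s a ▸ prefix_append _ s) hlen
  have h₂ : r ++ s <+: s.wpow a := by
    refine ⟨r ++ (s ++ r).wpow b, append_cancel_left (as := s) ?_⟩
    rw [← wpow_succ, h, wpow_succ, wpow_succ]
    simp only [append_assoc]
  have hcomm : s ++ r = r ++ s :=
    (prefix_of_prefix_length_le h₁ h₂ (by simp [Nat.add_comm])).eq_of_length
      (by simp [Nat.add_comm])
  obtain ⟨g, m, n, hsg, rfl⟩ := exists_wpow_of_append_comm hcomm
  obtain rfl : g = s := hs.2 g m hsg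
  exact ht.2 g (n + 1) (by rw [wpow_succ])

end List

open Finset

section Counting

variable {α : Type*} [DecidableEq α]

def reactionSet (p : List α × List α) : Finset (List α) := {p.1, p.2, p.1 ++ p.2}

theorem length_le_of_mem_reactionSet {p : List α × List α} {w : List α}
    (hw : w ∈ reactionSet p) : w.length ≤ (p.1 ++ p.2).length := by
  simp only [reactionSet, mem_insert, mem_singleton] at hw
  rcases hw with rfl | rfl | rfl <;> simp

theorem eq_append_of_mem_reactionSet {p : List α × List α} (h₁ : p.1 ≠ []) (h₂ : p.2 ≠ [])
    {w : List α} (hw : w ∈ reactionSet p) (hlen : (p.1 ++ p.2).length ≤ w.length) :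
    w = p.1 ++ p.2 := by
  have := List.length_pos_iff.mpr h₁
  have := List.length_pos_iff.mpr h₂
  simp only [reactionSet, mem_insert, mem_singleton] at hw
  rcases hw with rfl | rfl | rfl <;> simp_all

/-- `uv` is the unique longest element of `{u, v, uv}`. -/
theorem eq_or_eq_swap_of_reactionSet_eq {p q : List α × List α} (hp₁ : p.1 ≠ []) (hp₂ : p.2 ≠ [])
    (hq₁ : q.1 ≠ []) (hq₂ : q.2 ≠ []) (h : reactionSet p = reactionSet q) :
    q = p ∨ (q = p.swap ∧ p.1 ++ p.2 = p.2 ++ p.1) := by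
  obtain ⟨u, v⟩ := p
  obtain ⟨u', v'⟩ := q
  dsimp only at *
  have hz : u' ++ v' = u ++ v := by
    have hmem : u' ++ v' ∈ reactionSet (u, v) := h ▸ by simp [reactionSet]
    refine eq_append_of_mem_reactionSet hp₁ hp₂ hmem ?_
    exact length_le_of_mem_reactionSet (p := (u', v')) (h ▸ by simp [reactionSet])
  have hmem : ∀ w, w ∈ reactionSet (u', v') → w ≠ u' ++ v' → w = u ∨ w = v := by
    intro w hw hne
    rw [← h] at hw
    simpa [reactionSet, ← hz, hne] using hw
  have hu' := hmem u' (by simp [reactionSet]) (by simpa using hq₂)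
  have hv' := hmem v' (by simp [reactionSet]) (by simpa using hq₁)
  rcases hu' with rfl | rfl
  · exact Or.inl (by rw [List.append_cancel_left hz])
  rcases hv' with rfl | rfl
  · exact Or.inr ⟨rfl, hz.symm⟩
  · exact Or.inl (by rw [List.append_cancel_right hz])

theorem reactionSet_swap {p : List α × List α} (h : p.1 ++ p.2 = p.2 ++ p.1) :
    reactionSet p.swap = reactionSet p := by
  simp only [reactionSet, Prod.fst_swap, Prod.snd_swap, h, insert_comm]

/-- Commuting words of equal length are equal, so each fibre of `reactionSet` with two points
contains exactly one pair with `|u| < |v|`. -/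
theorem card_image_reactionSet_add_card_filter {P : Finset (List α × List α)}
    (hne : ∀ p ∈ P, p.1 ≠ [] ∧ p.2 ≠ []) (hswap : ∀ p ∈ P, p.swap ∈ P) :
    #(P.image reactionSet) +
      #(P.filter fun p => p.1 ++ p.2 = p.2 ++ p.1 ∧ p.1.length < p.2.length) = #P := by
  set B : List α × List α → Prop := fun p => p.1 ++ p.2 = p.2 ++ p.1 ∧ p.1.length < p.2.length
  have himage : P.image reactionSet = (P.filter fun p => ¬B p).image reactionSet := by
    refine (image_subset_image (filter_subset _ _)).antisymm' fun s hs => ?_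
    obtain ⟨p, hp, rfl⟩ := mem_image.mp hs
    by_cases hB : B p
    · refine mem_image.mpr ⟨p.swap, mem_filter.mpr ⟨hswap p hp, ?_⟩, reactionSet_swap hB.1⟩
      exact fun h => absurd h.2 (not_lt.mpr hB.2.le)
    · exact mem_image_of_mem _ (mem_filter.mpr ⟨hp, hB⟩)
  have hinj : Set.InjOn reactionSet (↑(P.filter fun p => ¬B p) : Set (List α × List α)) := by
    intro p hp q hq hpq
    rw [mem_coe, mem_filter] at hp hq
    rcases eq_or_eq_swap_of_reactionSet_eq (hne p hp.1).1 (hne p hp.1).2 (hne q hq.1).1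
      (hne q hq.1).2 hpq with h | ⟨rfl, hcomm⟩
    · exact h.symm
    · have hlen : p.1.length = p.2.length := by
        have h₁ := hp.2; have h₂ := hq.2
        simp only [B, hcomm, Prod.fst_swap, Prod.snd_swap, true_and, not_lt] at h₁ h₂
        omega
      have := (List.append_inj hcomm hlen).1
      exact Prod.ext this this.symm
  rw [himage, card_image_of_injOn hinj, Nat.add_comm]
  exact card_filter_add_card_filter_not _

end Counting

section Fintype

variable (α : Type*) [Fintype α] [DecidableEq α]

def wordsOfLength (m : ℕ) : Finset (List α) :=
  univ.image (List.ofFn : (Fin m → α) → List α)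

open Classical in
noncomputable def primitiveWords (d : ℕ) : Finset (List α) :=
  (wordsOfLength α d).filter List.IsPrimitive

def splitPairs (i : ℕ) : Finset (List α × List α) :=
  (Ioo 0 i).biUnion fun j => wordsOfLength α j ×ˢ wordsOfLength α (i - j)

variable {α}

theorem mem_wordsOfLength {m : ℕ} {w : List α} : w ∈ wordsOfLength α m ↔ w.length = m := by
  constructor
  · rintro hw
    obtain ⟨f, -, rfl⟩ := mem_image.mp hw
    exact List.length_ofFn
  · rintro rfl
    exact mem_image.mpr ⟨w.get, mem_univ _, List.ofFn_get w⟩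

theorem mem_primitiveWords {d : ℕ} {t : List α} :
    t ∈ primitiveWords α d ↔ t.length = d ∧ t.IsPrimitive := by
  simp only [primitiveWords, mem_filter, mem_wordsOfLength]

theorem mem_splitPairs {i : ℕ} {p : List α × List α} :
    p ∈ splitPairs α i ↔ p.1 ≠ [] ∧ p.2 ≠ [] ∧ p.1.length + p.2.length = i := by
  simp only [splitPairs, mem_biUnion, mem_Ioo, mem_product, mem_wordsOfLength, ne_eq,
    ← List.length_eq_zero_iff]
  constructor
  · rintro ⟨j, ⟨hj₀, hji⟩, h₁, h₂⟩
    omega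
  · rintro ⟨h₁, h₂, h⟩
    exact ⟨p.1.length, ⟨by omega, by omega⟩, rfl, by omega⟩

theorem wpow_pair_mem_filter_splitPairs {t : List α} (ht : t.IsPrimitive) {a c : ℕ}
    (ha : 0 < a) (hac : 2 * a < c) :
    (t.wpow a, t.wpow (c - a)) ∈ (splitPairs α (c * t.length)).filter
      fun p => p.1 ++ p.2 = p.2 ++ p.1 ∧ p.1.length < p.2.length := by
  simp only [mem_filter, mem_splitPairs, ne_eq, List.wpow_eq_nil_iff, List.length_wpow,
    List.wpow_comm, true_and, not_or]
  refine ⟨⟨⟨ha.ne', ht.1⟩, ⟨by omega, ht.1⟩, ?_⟩,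
    Nat.mul_lt_mul_of_pos_right (by omega) ht.length_pos⟩
  rw [← Nat.add_mul, Nat.add_sub_cancel' (by omega)]

variable (α)

theorem card_wordsOfLength (m : ℕ) : #(wordsOfLength α m) = Fintype.card α ^ m := by
  rw [wordsOfLength, card_image_of_injective _ List.ofFn_injective, card_univ,
    Fintype.card_fun, Fintype.card_fin]

theorem card_splitPairs (i : ℕ) : #(splitPairs α i) = (i - 1) * Fintype.card α ^ i := by
  rw [splitPairs, card_biUnion, sum_congr rfl (g := fun _ => Fintype.card α ^ i), sum_const,
    Nat.card_Ioo, smul_eq_mul, Nat.sub_zero]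
  · intro j hj
    rw [card_product, card_wordsOfLength, card_wordsOfLength, ← pow_add,
      Nat.add_sub_cancel' (mem_Ioo.mp hj).2.le]
  · intro j _ j' _ hjj'
    refine disjoint_left.mpr fun p hp hp' => hjj' ?_
    rw [mem_product, mem_wordsOfLength] at hp hp'
    exact hp.1.symm.trans hp'.1

theorem sum_card_primitiveWords {n : ℕ} (hn : 0 < n) :
    ∑ d ∈ n.divisors, #(primitiveWords α d) = Fintype.card α ^ n := by
  rw [← card_wordsOfLength, ← card_sigma]
  refine card_bij (fun x _ => x.2.wpow (n / x.1)) ?_ ?_ ?_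
  · rintro ⟨d, t⟩ hx
    simp only [mem_sigma, Nat.mem_divisors, mem_primitiveWords] at hx
    rw [mem_wordsOfLength, List.length_wpow, hx.2.1, Nat.div_mul_cancel hx.1.1]
  · rintro ⟨d, t⟩ hx ⟨d', t'⟩ hx' h
    simp only [mem_sigma, Nat.mem_divisors, mem_primitiveWords] at hx hx'
    obtain ⟨⟨hd, -⟩, rfl, ht⟩ := hx
    obtain ⟨⟨hd', -⟩, rfl, ht'⟩ := hx'
    obtain rfl := ht.eq_of_wpow_eq ht' (Nat.div_pos (Nat.le_of_dvd hn hd) ht.length_pos)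
      (Nat.div_pos (Nat.le_of_dvd hn hd') ht'.length_pos) h
    rfl
  · intro w hw
    rw [mem_wordsOfLength] at hw
    obtain ⟨t, m, ht, -, rfl⟩ :=
      List.exists_isPrimitive_wpow (w := w) (by rintro rfl; simp at hw; omega)
    rw [List.length_wpow] at hw
    refine ⟨⟨t.length, t⟩, ?_, ?_⟩
    · rw [mem_sigma, Nat.mem_divisors, mem_primitiveWords]
      exact ⟨⟨⟨m, by rw [← hw, Nat.mul_comm]⟩, hn.ne'⟩, rfl, ht⟩
    · simp only [← hw, Nat.mul_div_cancel _ ht.length_pos]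

theorem card_primitiveWords {n : ℕ} (hn : 0 < n) :
    (#(primitiveWords α n) : ℤ) =
      ∑ d ∈ n.divisors, ArithmeticFunction.moebius (n / d) * (Fintype.card α : ℤ) ^ d := by
  have hsum : ∀ m > 0, ∑ d ∈ m.divisors, (#(primitiveWords α d) : ℤ) = Fintype.card α ^ m :=
    fun m hm => by exact_mod_cast sum_card_primitiveWords α hm
  rw [← ArithmeticFunction.sum_eq_iff_sum_mul_moebius_eq.mp hsum n hn]
  simp only [Int.cast_id]
  exact Nat.sum_divisorsAntidiagonal' (fun x y => ArithmeticFunction.moebius x *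
    (Fintype.card α : ℤ) ^ y)

theorem card_filter_append_comm_splitPairs (i : ℕ) :
    #((splitPairs α i).filter fun p => p.1 ++ p.2 = p.2 ++ p.1 ∧ p.1.length < p.2.length) =
      ∑ d ∈ i.properDivisors, (i / d - 1) / 2 * #(primitiveWords α d) := by
  have hterm : ∀ d, (i / d - 1) / 2 * #(primitiveWords α d) =
      #(primitiveWords α d ×ˢ Icc 1 ((i / d - 1) / 2)) := fun d => by
    rw [card_product, Nat.card_Icc, Nat.add_sub_cancel, Nat.mul_comm]
  simp_rw [hterm]
  rw [← card_sigma]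
  symm
  refine card_bij (fun x _ => (x.2.1.wpow x.2.2, x.2.1.wpow (i / x.1 - x.2.2))) ?_ ?_ ?_
  · rintro ⟨d, t, a⟩ hx
    simp only [mem_sigma, mem_product, Nat.mem_properDivisors, mem_primitiveWords, mem_Icc] at hx
    obtain ⟨⟨⟨c, rfl⟩, -⟩, ⟨rfl, ht⟩, ha₁, ha₂⟩ := hx
    rw [Nat.mul_div_cancel_left _ ht.length_pos] at ha₂ ⊢
    rw [Nat.mul_comm]
    exact wpow_pair_mem_filter_splitPairs ht ha₁ (by dsimp only; omega)
  · rintro ⟨d, t, a⟩ hx ⟨d', t', a'⟩ hx' h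
    simp only [mem_sigma, mem_product, mem_primitiveWords, mem_Icc] at hx hx'
    obtain ⟨-, ⟨rfl, ht⟩, ha, -⟩ := hx
    obtain ⟨-, ⟨rfl, ht'⟩, ha', -⟩ := hx'
    have h₁ := (Prod.mk.inj h).1
    obtain rfl := ht.eq_of_wpow_eq ht' ha ha' h₁
    obtain rfl := List.wpow_injective ht.1 h₁
    rfl
  · rintro ⟨u, v⟩ hp
    simp only [mem_filter, mem_splitPairs] at hp
    obtain ⟨⟨hu, hv, rfl⟩, hcomm, hlt⟩ := hp
    obtain ⟨s, a, b, hs, ha, hb, rfl, rfl⟩ := List.exists_isPrimitive_of_append_comm hu hv hcomm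
    simp only [List.length_wpow] at hlt ⊢
    have hL := hs.length_pos
    have hab : a < b := Nat.lt_of_mul_lt_mul_right hlt
    have hq : (a * s.length + b * s.length) / s.length = a + b := by
      rw [← Nat.add_mul, Nat.mul_div_cancel _ hL]
    refine ⟨⟨s.length, s, a⟩, ?_, ?_⟩
    · rw [mem_sigma, mem_product, Nat.mem_properDivisors, mem_primitiveWords, mem_Icc, hq]
      exact ⟨⟨⟨a + b, by ring⟩, by nlinarith⟩, ⟨rfl, hs⟩, ha, by dsimp only; omega⟩
    · simp only [hq, Nat.add_sub_cancel_left]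

theorem card_image_reactionSet_splitPairs (i : ℕ) :
    #((splitPairs α i).image reactionSet) +
      ∑ d ∈ i.properDivisors, (i / d - 1) / 2 * #(primitiveWords α d) =
    (i - 1) * Fintype.card α ^ i := by
  rw [← card_filter_append_comm_splitPairs, ← card_splitPairs]
  refine card_image_reactionSet_add_card_filter (fun p hp => ?_) (fun p hp => ?_) <;>
    rw [mem_splitPairs] at hp
  · exact ⟨hp.1, hp.2.1⟩
  · rw [mem_splitPairs]
    exact ⟨hp.2.1, hp.1, by simp only [Prod.fst_swap, Prod.snd_swap]; omega⟩

end Fintype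

theorem S_eq_card_image_reactionSet (k i : ℕ) :
    S k i = #((splitPairs (Fin k) i).image reactionSet) := by
  rw [S, ← Set.ncard_coe_finset]
  congr 1
  ext s
  simp only [Set.mem_ofPred_eq, coe_image, Set.mem_image, mem_coe, Prod.exists, mem_splitPairs,
    reactionSet, List.length_append]
  constructor
  · rintro ⟨u, v, hu, hv, hlen, rfl⟩
    exact ⟨u, v, ⟨hu, hv, hlen⟩, rfl⟩
  · rintro ⟨u, v, ⟨hu, hv, hlen⟩, rfl⟩
    exact ⟨u, v, hu, hv, hlen, rfl⟩

theorem stmt_10_general (k : ℕ) :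
    (∀ i : ℕ, 2 ≤ i →
      (S k i : ℤ) = ((i : ℤ) - 1) * (k : ℤ) ^ i -
        ∑ d ∈ i.properDivisors, (((i / d - 1) / 2 : ℕ) : ℤ) *
          ∑ d' ∈ d.divisors, ArithmeticFunction.moebius (d / d') * (k : ℤ) ^ d') ∧
    (∀ n : ℕ, RSET k n = 2 * ∑ i ∈ Finset.Icc 2 n, S k i) := by
  refine ⟨fun i hi => ?_, fun n => rfl⟩
  have hcount := card_image_reactionSet_splitPairs (Fin k) i
  rw [← S_eq_card_image_reactionSet, Fintype.card_fin] at hcount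
  have hprim : ∀ d ∈ i.properDivisors, (#(primitiveWords (Fin k) d) : ℤ) =
      ∑ d' ∈ d.divisors, ArithmeticFunction.moebius (d / d') * (k : ℤ) ^ d' := fun d hd => by
    simpa using card_primitiveWords (Fin k) (Nat.pos_of_mem_properDivisors hd)
  rw [← sum_congr rfl fun d hd => congrArg _ (hprim d hd)]
  have hcount_int := congrArg (Nat.cast : ℕ → ℤ) hcount
  simp only [Nat.cast_add, Nat.cast_sum, Nat.cast_mul, Nat.cast_pow,
    Nat.cast_sub (show 1 ≤ i by omega), Nat.cast_one] at hcount_int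
  linarith

/-- S(i) = (i−1)·k^i − Σ_{d|i, d<i} ⌊(i/d−1)/2⌋·Σ_{d'|d} μ(d/d')·k^{d'},
and consequently |R^SET_n| = 2·Σ_{i=2}^{n} S(i). -/
theorem stmt_10 (k : ℕ) (hk : 2 ≤ k) :
    (∀ i : ℕ, 2 ≤ i →
      (S k i : ℤ) = ((i : ℤ) - 1) * (k : ℤ) ^ i -
        ∑ d ∈ i.properDivisors, (((i / d - 1) / 2 : ℕ) : ℤ) *
          ∑ d' ∈ d.divisors, ArithmeticFunction.moebius (d / d') * (k : ℤ) ^ d') ∧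
    (∀ n : ℕ, RSET k n = 2 * ∑ i ∈ Finset.Icc 2 n, S k i) :=
  stmt_10_general k
end

section
/- Fix an integer k ≥ 2 and an alphabet Σ of k symbols. As n → ∞, |R^SET_n| is asymptotically equivalent to |R^TUPLE_n|; that is, lim_{n→∞} |R^SET_n|/|R^TUPLE_n| = 1. -/
/-- T(i): the number of ordered triples (u,v,z) of nonempty words with uv = z, |z| = i
(the TUPLE convention). -/
noncomputable def T (k i : ℕ) : ℕ :=
  Set.ncard {t : List (Fin k) × List (Fin k) × List (Fin k) |
    t.1 ≠ [] ∧ t.2.1 ≠ [] ∧ t.1 ++ t.2.1 = t.2.2 ∧ t.2.2.length = i}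

/-- |R^TUPLE_n| -/
noncomputable def RTUPLE (k n : ℕ) : ℕ := 2 * ∑ i ∈ Finset.Icc 2 n, T k i

/-!
The map `(u, v) ↦ {u, v, uv}` from splittings onto the sets counted by `S` is injective off
the commuting pairs `uv = vu`, so `T(i) - S(i)` is at most their number. A commuting pair is
determined by `|u|` and the first `⌊i/2⌋` letters of `uv`: the shorter word is a prefix of
`uv = vu`, and the longer one is the only word of its length commuting with it. Hence
`T(i) - S(i) ≤ i k^⌊i/2⌋`, which is negligible against `T(i) ≥ k^i`.
-/

namespace List

variable {α : Type*}

theorem append_flatten_replicate_comm {x u : List α} (h : x ++ u = u ++ x) (n : ℕ) :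
    x ++ (replicate n u).flatten = (replicate n u).flatten ++ x := by
  induction n with
  | zero => simp
  | succ n ih =>
    rw [replicate_succ, flatten_cons, ← append_assoc, h, append_assoc, ih, append_assoc]

theorem eq_take_flatten_replicate_of_append_comm {x u : List α} (hu : u ≠ [])
    (h : x ++ u = u ++ x) : x = ((replicate x.length u).flatten).take x.length := by
  have hlen : x.length ≤ ((replicate x.length u).flatten).length := by
    simpa using Nat.le_mul_of_pos_right _ (length_pos_iff.2 hu)
  calc x = (x ++ (replicate x.length u).flatten).take x.length := take_left.symm
    _ = _ := by rw [append_flatten_replicate_comm h, take_append_of_le_length hlen]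

theorem eq_of_append_comm_of_length_eq {x y u : List α} (hu : u ≠ [])
    (hx : x ++ u = u ++ x) (hy : y ++ u = u ++ y) (hl : x.length = y.length) : x = y := by
  rw [eq_take_flatten_replicate_of_append_comm hu hx,
    eq_take_flatten_replicate_of_append_comm hu hy, hl]

theorem take_eq_take_of_le {l l' : List α} {m n : ℕ} (h : l.take m = l'.take m) (hn : n ≤ m) :
    l.take n = l'.take n := by
  simpa [take_take, min_eq_left hn] using congrArg (take n) h

theorem eq_of_append_comm_of_take_eq {u v u' v' : List α} {m : ℕ} (hu : u ≠ []) (hv : v ≠ [])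
    (hc : u ++ v = v ++ u) (hc' : u' ++ v' = v' ++ u') (hlu : u.length = u'.length)
    (hlv : v.length = v'.length) (hm : min u.length v.length ≤ m)
    (ht : (u ++ v).take m = (u' ++ v').take m) : u = u' ∧ v = v' := by
  rcases le_total u.length v.length with huv | hvu
  · have hu' : u = u' := by
      have := take_eq_take_of_le ht (n := u.length) (by omega)
      rwa [take_left, hlu, take_left] at this
    subst hu'
    exact ⟨rfl, eq_of_append_comm_of_length_eq hu hc.symm hc'.symm hlv⟩
  · have hv' : v = v' := by
      have := take_eq_take_of_le ht (n := v.length) (by omega)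
      rwa [hc, hc', take_left, hlv, take_left] at this
    subst hv'
    exact ⟨eq_of_append_comm_of_length_eq hv hc hc' hlu, rfl⟩

end List

theorem Set.ncard_le_ncard_image_add_ncard {α β : Type*} {f : α → β} {s t : Set α}
    (hs : s.Finite) (hts : t ⊆ s) (hf : Set.InjOn f (s \ t)) :
    s.ncard ≤ (f '' s).ncard + t.ncard :=
  calc s.ncard ≤ (s \ t).ncard + t.ncard := Set.ncard_le_ncard_sdiff_add_ncard s t (hs.subset hts)
    _ = (f '' (s \ t)).ncard + t.ncard := by rw [hf.ncard_image]
    _ ≤ (f '' s).ncard + t.ncard := by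
      gcongr
      exacts [hs.image f, Set.sdiff_subset]

theorem List.ncard_setOf_length_eq (α : Type*) [Fintype α] (n : ℕ) :
    {l : List α | l.length = n}.ncard = Fintype.card α ^ n := by
  rw [← Nat.card_coe_set_eq]
  exact (Nat.card_eq_fintype_card (α := List.Vector α n)).trans (card_vector n)

section WordPairs

variable (α : Type*)

def wordPairs (i : ℕ) : Set (List α × List α) :=
  {p | p.1 ≠ [] ∧ p.2 ≠ [] ∧ p.1.length + p.2.length = i}

def commPairs (i : ℕ) : Set (List α × List α) :=
  {p ∈ wordPairs α i | p.1 ++ p.2 = p.2 ++ p.1}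

variable {α}

def wordSet [DecidableEq α] (p : List α × List α) : Finset (List α) := {p.1, p.2, p.1 ++ p.2}

theorem wordPairs_finite [Finite α] (i : ℕ) : (wordPairs α i).Finite := by
  refine ((List.finite_length_le α i).prod (List.finite_length_le α i)).subset ?_
  rintro p ⟨-, -, hp⟩
  exact ⟨by simp; omega, by simp; omega⟩

theorem pow_le_ncard_wordPairs [Fintype α] {i : ℕ} (hi : 2 ≤ i) :
    Fintype.card α ^ i ≤ (wordPairs α i).ncard := by
  rw [← List.ncard_setOf_length_eq]
  calc {l : List α | l.length = i}.ncard
      ≤ ((fun p : List α × List α => p.1 ++ p.2) '' wordPairs α i).ncard := by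
        refine Set.ncard_le_ncard ?_ ((wordPairs_finite i).image _)
        intro z (hz : z.length = i)
        refine ⟨(z.take 1, z.drop 1), ⟨?_, ?_, ?_⟩, List.take_append_drop 1 z⟩ <;>
          simp [← List.length_pos_iff] <;> omega
    _ ≤ (wordPairs α i).ncard := Set.ncard_image_le (wordPairs_finite i)

theorem ncard_commPairs_le [Fintype α] (i : ℕ) :
    (commPairs α i).ncard ≤ i * Fintype.card α ^ (i / 2) := by
  have hcard : (Set.Iio i ×ˢ {l : List α | l.length = i / 2}).ncard =
      i * Fintype.card α ^ (i / 2) := by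
    rw [Set.ncard_prod, Set.ncard_Iio_nat, List.ncard_setOf_length_eq]
  rw [← hcard]
  refine Set.ncard_le_ncard_of_injOn (fun p => (p.1.length, (p.1 ++ p.2).take (i / 2)))
    ?_ ?_ ((Set.finite_Iio i).prod (List.finite_length_eq α _))
  · rintro p ⟨⟨-, hv, hl⟩, -⟩
    have := List.length_pos_iff.2 hv
    exact ⟨by simp; omega, by simp; omega⟩
  · rintro p ⟨⟨hu, hv, hl⟩, hc⟩ p' ⟨⟨-, -, hl'⟩, hc'⟩ h
    simp only [Prod.mk.injEq] at h
    obtain ⟨hu', hv'⟩ :=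
      List.eq_of_append_comm_of_take_eq hu hv hc hc' h.1 (by omega) (by omega) h.2
    exact Prod.ext hu' hv'

theorem injOn_wordSet [DecidableEq α] (i : ℕ) :
    Set.InjOn wordSet (wordPairs α i \ commPairs α i) := by
  rintro ⟨u, v⟩ ⟨⟨hu, hv, hl⟩, hc⟩ ⟨u', v'⟩ ⟨⟨hu', hv', hl'⟩, -⟩ h
  dsimp only at hu hv hl hu' hv' hl'
  have hmem : ∀ x, x = u ∨ x = v ∨ x = u ++ v ↔ x = u' ∨ x = v' ∨ x = u' ++ v' := by
    simpa [wordSet] using Finset.ext_iff.1 h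
  have := List.length_pos_iff.2 hu
  have := List.length_pos_iff.2 hv
  have := List.length_pos_iff.2 hu'
  have := List.length_pos_iff.2 hv'
  have hz : u ++ v = u' ++ v' := by
    rcases (hmem (u ++ v)).1 (by simp) with h | h | h
    · have := congrArg List.length h; simp at this; omega
    · have := congrArg List.length h; simp at this; omega
    · exact h
  rcases (hmem u').2 (by simp) with rfl | rfl | h
  · rw [List.append_cancel_left hz]
  · rcases (hmem v').2 (by simp) with rfl | rfl | h
    · exact absurd hz fun h => hc ⟨⟨hu, hv, hl⟩, h⟩
    · rw [List.append_cancel_right hz]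
    · have := congrArg List.length h; simp at this; omega
  · have := congrArg List.length h; simp at this; omega

end WordPairs

theorem T_eq_ncard_wordPairs (k i : ℕ) : T k i = (wordPairs (Fin k) i).ncard := by
  rw [T, ← Set.InjOn.ncard_image (f := fun t => (t.1, t.2.1))]
  · congr 1
    ext ⟨u, v⟩
    simp [wordPairs]
  · rintro ⟨u, v, z⟩ ⟨-, -, hz, -⟩ ⟨u', v', z'⟩ ⟨-, -, hz', -⟩ h
    simp_all

theorem S_eq_ncard_image_wordSet (k i : ℕ) :
    S k i = (wordSet '' wordPairs (Fin k) i).ncard := by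
  rw [S]
  congr 1
  ext s
  simp [wordPairs, wordSet, eq_comm, and_assoc]

theorem S_le_T (k i : ℕ) : S k i ≤ T k i := by
  rw [S_eq_ncard_image_wordSet, T_eq_ncard_wordPairs]
  exact Set.ncard_image_le (wordPairs_finite i)

theorem T_le_S_add (k i : ℕ) : T k i ≤ S k i + i * k ^ (i / 2) := by
  rw [S_eq_ncard_image_wordSet, T_eq_ncard_wordPairs]
  calc _ ≤ _ + (commPairs (Fin k) i).ncard :=
        Set.ncard_le_ncard_image_add_ncard (wordPairs_finite i) (fun _ hp => hp.1)
          (injOn_wordSet i)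
    _ ≤ _ := by simpa using ncard_commPairs_le (α := Fin k) i

theorem pow_le_T (k : ℕ) {i : ℕ} (hi : 2 ≤ i) : k ^ i ≤ T k i := by
  simpa [T_eq_ncard_wordPairs] using pow_le_ncard_wordPairs (α := Fin k) hi

theorem RSET_le_RTUPLE (k n : ℕ) : RSET k n ≤ RTUPLE k n := by
  unfold RSET RTUPLE
  gcongr with i
  exact S_le_T k i

theorem RTUPLE_le_RSET_add {k : ℕ} (hk : 1 ≤ k) (n : ℕ) :
    RTUPLE k n ≤ RSET k n + 2 * (n ^ 2 * k ^ (n / 2)) := by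
  have herr : ∑ i ∈ Finset.Icc 2 n, i * k ^ (i / 2) ≤ n ^ 2 * k ^ (n / 2) :=
    calc ∑ i ∈ Finset.Icc 2 n, i * k ^ (i / 2)
        ≤ ∑ _i ∈ Finset.Icc 2 n, n * k ^ (n / 2) := Finset.sum_le_sum fun i hi =>
          have hin := (Finset.mem_Icc.1 hi).2
          Nat.mul_le_mul hin (Nat.pow_le_pow_right hk (Nat.div_le_div_right hin))
      _ ≤ n ^ 2 * k ^ (n / 2) := by
          rw [Finset.sum_const, Nat.card_Icc, smul_eq_mul, sq, mul_assoc]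
          gcongr
          omega
  unfold RSET RTUPLE
  have := Finset.sum_le_sum fun i (_ : i ∈ Finset.Icc 2 n) => T_le_S_add k i
  rw [Finset.sum_add_distrib] at this
  omega

theorem two_mul_pow_le_RTUPLE (k : ℕ) {n : ℕ} (hn : 2 ≤ n) : 2 * k ^ n ≤ RTUPLE k n := by
  unfold RTUPLE
  gcongr
  exact (pow_le_T k hn).trans
    (Finset.single_le_sum (fun i _ => Nat.zero_le _) (Finset.mem_Icc.2 ⟨hn, le_rfl⟩))

/-- With `r = √k ^ n`: `RTUPLE ≥ 2 r²` while `RTUPLE - RSET ≤ 2 n² r`. -/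
theorem one_sub_le_RSET_div_RTUPLE {k n : ℕ} (hk : 1 ≤ k) (hn : 2 ≤ n) :
    1 - (n : ℝ) ^ 2 / √(k : ℝ) ^ n ≤ (RSET k n : ℝ) / RTUPLE k n := by
  set r := √(k : ℝ) ^ n
  have hsqrt : 1 ≤ √(k : ℝ) := Real.one_le_sqrt.2 (by exact_mod_cast hk)
  have hr : 0 < r := by positivity
  have hr2 : r ^ 2 = (k : ℝ) ^ n := by
    rw [← pow_mul, mul_comm, pow_mul, Real.sq_sqrt (by positivity)]
  have hhalf : (k : ℝ) ^ (n / 2) ≤ r := by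
    rw [← Real.sq_sqrt (Nat.cast_nonneg k), ← pow_mul]
    exact pow_le_pow_right₀ hsqrt (Nat.mul_div_le n 2)
  have hlow : 2 * r ^ 2 ≤ RTUPLE k n := by
    rw [hr2]; exact_mod_cast two_mul_pow_le_RTUPLE k hn
  have hup : (RTUPLE k n : ℝ) ≤ RSET k n + 2 * (n ^ 2 * k ^ (n / 2)) := by
    exact_mod_cast RTUPLE_le_RSET_add hk n
  have hpos : (0 : ℝ) < RTUPLE k n := lt_of_lt_of_le (by positivity) hlow
  rw [sub_le_iff_le_add, ← sub_le_iff_le_add', one_sub_div hpos.ne', div_le_div_iff₀ hpos hr]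
  calc ((RTUPLE k n : ℝ) - RSET k n) * r ≤ 2 * (n ^ 2 * k ^ (n / 2)) * r := by
        gcongr; linarith
    _ ≤ 2 * (n ^ 2 * r) * r := by gcongr
    _ = n ^ 2 * (2 * r ^ 2) := by ring
    _ ≤ n ^ 2 * RTUPLE k n := by gcongr

/-- |R^SET_n| ∼ |R^TUPLE_n| as n → ∞, i.e. their ratio tends to 1. -/
theorem stmt_12 (k : ℕ) (hk : 2 ≤ k) :
    Filter.Tendsto (fun n : ℕ => (RSET k n : ℝ) / (RTUPLE k n : ℝ))
      Filter.atTop (nhds 1) := by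
  have hsqrt : 1 < √(k : ℝ) := Real.lt_sqrt_of_sq_lt (by norm_num; exact_mod_cast hk)
  have hlow :
      Filter.Tendsto (fun n : ℕ => 1 - (n : ℝ) ^ 2 / √(k : ℝ) ^ n) Filter.atTop (nhds 1) := by
    simpa using tendsto_const_nhds.sub (tendsto_pow_const_div_const_pow_of_one_lt 2 hsqrt)
  refine tendsto_of_tendsto_of_tendsto_of_le_of_le' hlow tendsto_const_nhds ?_ ?_
  · filter_upwards [Filter.eventually_ge_atTop 2] with n hn
    exact one_sub_le_RSET_div_RTUPLE (by omega) hn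
  · exact Filter.Eventually.of_forall fun n =>
      div_le_one_of_le₀ (by exact_mod_cast RSET_le_RTUPLE k n) (Nat.cast_nonneg _)
end

section
/- Fix an integer k ≥ 2 and an alphabet Σ of k symbols, and let r be a positive integer. Then N_{r,r}, the number of pairs ({ū, v̄}, z̄) where {ū, v̄} is an unordered (possibly equal) pair of non-oriented polymers of length r and z̄ is the equivalence class of u'v' for some representatives u' ∈ {u, u⁻} and v' ∈ {v, v⁻}, equals 2·n̄_r·(n̄_r − 1) + 3·n̄_r + 2·n̄_r·p̄_r + p̄_r·(p̄_r + 1)/2, where p̄_r and n̄_r denote the numbers of non-oriented polymers of length r that are palindromic and non-palindromic, respectively. -/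
/-!
Let `K = k ^ r` be the number of words of length `r`. The reversal involution shows
`p̄_r + 2 n̄_r = K`. The reactions counted by `N_{r,r}` are the images of the ordered pairs
`(u, v)` of words under `(u, v) ↦ ({ū, v̄}, class of uv)`, and two pairs have the same image
exactly when they are equal or related by `(u, v) ↦ (v⁻, u⁻)` (since `|u| = |v|`, the word `uv`
determines `u` and `v`). That involution fixes precisely the `K` pairs `(u, u⁻)`, so
`2 N_{r,r} = K² + K`, and the formula follows by substituting `K = p̄_r + 2 n̄_r`.
-/

/-- The non-oriented polymer (equivalence class under reversal) of a word w,
represented as the finset {w, w.reverse}. -/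
noncomputable def cls {k : ℕ} (w : List (Fin k)) : Finset (List (Fin k)) := {w, w.reverse}

/-- p̄_m: the number of non-oriented polymers of length m whose members are palindromic. -/
noncomputable def pbar (k m : ℕ) : ℕ :=
  Set.ncard {s : Finset (List (Fin k)) |
    ∃ w : List (Fin k), w.length = m ∧ w.reverse = w ∧ s = cls w}

/-- n̄_m: the number of non-oriented polymers of length m whose members are non-palindromic. -/
noncomputable def nbar (k m : ℕ) : ℕ :=
  Set.ncard {s : Finset (List (Fin k)) |
    ∃ w : List (Fin k), w.length = m ∧ w.reverse ≠ w ∧ s = cls w}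

/-- N_{r,r}: the number of pairs ({ū, v̄}, z̄) where {ū, v̄} is an unordered (possibly
equal) pair of non-oriented polymers of length r and z̄ is the class of u'v' for some
representatives u' ∈ ū, v' ∈ v̄. -/
noncomputable def Ndiag (k r : ℕ) : ℕ :=
  Set.ncard {t : Sym2 (Finset (List (Fin k))) × Finset (List (Fin k)) |
    ∃ u v : List (Fin k), u.length = r ∧ v.length = r ∧ t.1 = s(cls u, cls v) ∧
      ∃ u' ∈ cls u, ∃ v' ∈ cls v, t.2 = cls (u' ++ v')}

namespace Finset

theorem two_mul_card_image_eq_card_add_card_filter {α β : Type*} [DecidableEq α]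
    [DecidableEq β] (s : Finset α) (f : α → β) (σ : α → α) (hσ : ∀ x ∈ s, σ x ∈ s)
    (hf : ∀ x ∈ s, ∀ y ∈ s, f y = f x ↔ y = x ∨ y = σ x) :
    2 * (s.image f).card = s.card + (s.filter fun x => σ x = x).card := by
  have hfibre : ∀ x ∈ s, (s.filter fun y => f y = f x) = {x, σ x} := fun x hx => by
    ext y
    simp only [mem_filter, mem_insert, mem_singleton]
    refine ⟨fun ⟨hy, hfy⟩ => (hf x hx y hy).1 hfy, ?_⟩
    rintro (rfl | rfl)
    · exact ⟨hx, rfl⟩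
    · exact ⟨hσ x hx, (hf x hx _ (hσ x hx)).2 (Or.inr rfl)⟩
  have hinv : ∀ x ∈ s, σ (σ x) = x := fun x hx => by
    rcases (hf (σ x) (hσ x hx) x hx).1 ((hf x hx _ (hσ x hx)).2 (Or.inr rfl)).symm with h | h
    · rw [← h, ← h]
    · exact h.symm
  have hcount : ∀ b ∈ s.image f, (s.filter fun x => f x = b).card +
      ((s.filter fun x => σ x = x).filter fun x => f x = b).card = 2 := by
    intro b hb
    obtain ⟨x, hx, rfl⟩ := mem_image.1 hb
    rw [filter_comm, hfibre x hx]
    by_cases hfix : σ x = x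
    · rw [hfix, pair_eq_singleton, filter_singleton, if_pos hfix]
      rfl
    · have hfix' : σ (σ x) ≠ σ x := by rw [hinv x hx]; exact Ne.symm hfix
      rw [card_pair (Ne.symm hfix), filter_insert, filter_singleton, if_neg hfix, if_neg hfix']
      rfl
  rw [card_eq_sum_card_fiberwise fun x hx => mem_image_of_mem f hx,
    card_eq_sum_card_fiberwise fun x hx => mem_image_of_mem f (mem_filter.1 hx).1,
    ← sum_add_distrib, sum_congr rfl hcount, sum_const, smul_eq_mul, mul_comm]

end Finset

namespace Polymer

variable {k : ℕ}

theorem mem_cls {v w : List (Fin k)} : v ∈ cls w ↔ v = w ∨ v = w.reverse := by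
  simp [cls]

theorem cls_reverse (w : List (Fin k)) : cls w.reverse = cls w := by
  simp only [cls, List.reverse_reverse]
  exact Finset.pair_comm _ _

theorem cls_eq_cls_iff {v w : List (Fin k)} : cls v = cls w ↔ v = w ∨ v = w.reverse := by
  refine ⟨fun h => mem_cls.1 (h ▸ mem_cls.2 (Or.inl rfl)), ?_⟩
  rintro (rfl | rfl)
  · rfl
  · exact cls_reverse w

theorem cls_eq_cls_of_mem {v w : List (Fin k)} (h : v ∈ cls w) : cls v = cls w :=
  cls_eq_cls_iff.2 (mem_cls.1 h)

theorem length_eq_of_mem_cls {v w : List (Fin k)} (h : v ∈ cls w) : v.length = w.length := by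
  rcases mem_cls.1 h with rfl | rfl <;> simp

variable (k) in
noncomputable def words (r : ℕ) : Finset (List (Fin k)) :=
  Finset.univ.image (List.ofFn : (Fin r → Fin k) → List (Fin k))

theorem mem_words {r : ℕ} {w : List (Fin k)} : w ∈ words k r ↔ w.length = r := by
  constructor
  · rintro h
    obtain ⟨f, -, rfl⟩ := Finset.mem_image.1 h
    exact List.length_ofFn
  · rintro rfl
    exact Finset.mem_image.2 ⟨w.get, Finset.mem_univ _, List.ofFn_get w⟩

variable (k) in
theorem card_words (r : ℕ) : (words k r).card = k ^ r := by
  rw [words, Finset.card_image_of_injective _ List.ofFn_injective]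
  simp

theorem setOf_cls_eq_image (m : ℕ) (P : List (Fin k) → Prop) [DecidablePred P] :
    {s | ∃ w : List (Fin k), w.length = m ∧ P w ∧ s = cls w} =
      ↑(((words k m).filter P).image cls) := by
  ext s
  simp only [Set.mem_ofPred_eq, Finset.coe_image, Finset.coe_filter, Set.mem_image, mem_words]
  constructor
  · rintro ⟨w, hw, hP, rfl⟩
    exact ⟨w, ⟨hw, hP⟩, rfl⟩
  · rintro ⟨w, ⟨hw, hP⟩, rfl⟩
    exact ⟨w, hw, hP, rfl⟩

theorem two_mul_ncard_setOf_cls (m : ℕ) (P : List (Fin k) → Prop) [DecidablePred P]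
    (hP : ∀ w, P w → P w.reverse) :
    2 * {s | ∃ w : List (Fin k), w.length = m ∧ P w ∧ s = cls w}.ncard =
      ((words k m).filter P).card +
        (((words k m).filter P).filter fun w => w.reverse = w).card := by
  rw [setOf_cls_eq_image, Set.ncard_coe_finset]
  refine Finset.two_mul_card_image_eq_card_add_card_filter _ _ _ (fun w hw => ?_)
    (fun w _ v _ => cls_eq_cls_iff)
  obtain ⟨hw, hPw⟩ := Finset.mem_filter.1 hw
  exact Finset.mem_filter.2 ⟨mem_words.2 (by simpa using mem_words.1 hw), hP w hPw⟩

theorem pbar_eq_card_palindromes (m : ℕ) :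
    pbar k m = ((words k m).filter fun w => w.reverse = w).card := by
  have h := two_mul_ncard_setOf_cls (k := k) m (fun w => w.reverse = w)
    (fun w hw => by rw [hw, hw])
  rw [Finset.filter_filter, Finset.filter_congr fun w _ => and_self_iff] at h
  rw [pbar]
  omega

theorem two_mul_nbar_eq_card_nonpalindromes (m : ℕ) :
    2 * nbar k m = ((words k m).filter fun w => w.reverse ≠ w).card := by
  have h := two_mul_ncard_setOf_cls (k := k) m (fun w => w.reverse ≠ w)
    (fun w hw h => hw (by rw [← h, List.reverse_reverse]))
  rw [Finset.filter_filter, Finset.filter_false_of_mem fun w _ => (not_and_self_iff _).1,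
    Finset.card_empty, add_zero] at h
  rwa [nbar]

variable (k) in
theorem pbar_add_two_mul_nbar (m : ℕ) : pbar k m + 2 * nbar k m = k ^ m := by
  rw [pbar_eq_card_palindromes, two_mul_nbar_eq_card_nonpalindromes,
    Finset.card_filter_add_card_filter_not, card_words]

noncomputable def ligate (p : List (Fin k) × List (Fin k)) :
    Sym2 (Finset (List (Fin k))) × Finset (List (Fin k)) :=
  (s(cls p.1, cls p.2), cls (p.1 ++ p.2))

theorem ligate_reverse_swap (u v : List (Fin k)) :
    ligate (v.reverse, u.reverse) = ligate (u, v) := by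
  simp only [ligate, cls_reverse, ← List.reverse_append, Sym2.eq_swap]

theorem ligate_eq_ligate_iff {u v u' v' : List (Fin k)} (hu : u'.length = u.length)
    (huv : u.length = v.length) :
    ligate (u', v') = ligate (u, v) ↔ (u', v') = (u, v) ∨ (u', v') = (v.reverse, u.reverse) := by
  refine ⟨fun h => ?_, ?_⟩
  · rcases cls_eq_cls_iff.1 (congrArg Prod.snd h) with h | h
    · exact Or.inl (Prod.ext_iff.2 (List.append_inj h hu))
    · rw [List.reverse_append] at h
      exact Or.inr (Prod.ext_iff.2 (List.append_inj h (by simp [hu, huv])))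
  · rintro (h | h) <;> rw [h]
    exact ligate_reverse_swap u v

theorem Ndiag_eq_ncard_image (r : ℕ) :
    Ndiag k r = ((words k r ×ˢ words k r).image ligate).card := by
  rw [Ndiag, ← Set.ncard_coe_finset]
  congr 1
  ext ⟨e, z⟩
  simp only [Set.mem_ofPred_eq, Finset.coe_image, Set.mem_image, Finset.mem_coe,
    Finset.mem_product, mem_words, Prod.exists]
  constructor
  · rintro ⟨u, v, hu, hv, rfl, u', hu', v', hv', rfl⟩
    refine ⟨u', v', ⟨by rw [length_eq_of_mem_cls hu', hu], by rw [length_eq_of_mem_cls hv', hv]⟩,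
      ?_⟩
    rw [ligate, cls_eq_cls_of_mem hu', cls_eq_cls_of_mem hv']
  · rintro ⟨u, v, ⟨hu, hv⟩, h⟩
    obtain ⟨rfl, rfl⟩ := Prod.ext_iff.1 h
    exact ⟨u, v, hu, hv, rfl, u, mem_cls.2 (Or.inl rfl), v, mem_cls.2 (Or.inl rfl), rfl⟩

theorem filter_reverse_swap_eq_image (r : ℕ) :
    ((words k r ×ˢ words k r).filter fun p => (p.2.reverse, p.1.reverse) = p) =
      (words k r).image fun u => (u, u.reverse) := by
  ext ⟨u, v⟩
  simp only [Finset.mem_filter, Finset.mem_product, Finset.mem_image, mem_words, Prod.mk.injEq]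
  constructor
  · rintro ⟨⟨hu, -⟩, rfl, -⟩
    exact ⟨v.reverse, hu, rfl, v.reverse_reverse⟩
  · rintro ⟨u, hu, rfl, rfl⟩
    simp [hu]

variable (k) in
theorem two_mul_Ndiag (r : ℕ) : 2 * Ndiag k r = k ^ r * k ^ r + k ^ r := by
  rw [Ndiag_eq_ncard_image, Finset.two_mul_card_image_eq_card_add_card_filter _ _
    (fun p => (p.2.reverse, p.1.reverse)), filter_reverse_swap_eq_image,
    Finset.card_image_of_injective _ fun _ _ h => congrArg Prod.fst h, Finset.card_product,
    card_words]
  · intro p hp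
    simp only [Finset.mem_product, mem_words] at hp ⊢
    simp [hp]
  · intro p hp q hq
    simp only [Finset.mem_product, mem_words] at hp hq
    exact ligate_eq_ligate_iff (by rw [hq.1, hp.1]) (by rw [hp.1, hp.2])

end Polymer

theorem stmt_18_general (k : ℕ) (r : ℕ) :
    Ndiag k r =
      2 * nbar k r * (nbar k r - 1) + 3 * nbar k r + 2 * nbar k r * pbar k r +
        pbar k r * (pbar k r + 1) / 2 := by
  have hN := Polymer.two_mul_Ndiag k r
  rw [← Polymer.pbar_add_two_mul_nbar] at hN
  obtain ⟨d, hd⟩ := Nat.even_mul_succ_self (pbar k r)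
  rw [hd, ← two_mul, Nat.mul_div_cancel_left _ two_pos]
  generalize pbar k r = p, nbar k r = n, Ndiag k r = N at hN hd ⊢
  rcases n with _ | n
  · linarith
  · rw [Nat.add_sub_cancel]
    linarith

/-- N_{r,r} = 2·n̄_r·(n̄_r − 1) + 3·n̄_r + 2·n̄_r·p̄_r + p̄_r·(p̄_r + 1)/2. -/
theorem stmt_18 (k : ℕ) (hk : 2 ≤ k) (r : ℕ) (hr : 0 < r) :
    Ndiag k r =
      2 * nbar k r * (nbar k r - 1) + 3 * nbar k r + 2 * nbar k r * pbar k r +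
        pbar k r * (pbar k r + 1) / 2 :=
  stmt_18_general k r
end
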